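/- Let w : {(i,j) : 1 ≤ i < j ≤ n} → ℝ≥0 be 'total potential errors' of the form w(i,j) = c·D̄·(t_j - t_i) where t_1 < ⋯ < t_n, c ≥ 0, D̄ ≥ 0. Given non-expanding maps M_{i,j} : X_i → X_j between metric spaces with d(M_{j,k}(M_{i,j}(x)), M_{i,k}(x)) ≤ c·(t_k - t_j)·D̄ for all i < j < k and x in the unit ball, then for any two refinements T₁, T₂ of a subdivision S = {s_1 < ⋯ < s_m} of [t_1, t_n], the compositions along T₁ and T₂ applied to a unit-ball element differ at points of S by at most 2·Σ_{i=1}^{m-1} c·D̄·(s_{i+1} - s_i) = 2·c·D̄·(s_m - s_1). -/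

import Mathlib

/-!
Each composite along a chain `r 0 < r 1 < ⋯ < r n` stays within `c·D̄·(t (r n) - t (r 0))` of
the direct map `M (r 0) (r n)`: appending one step costs nothing on the accumulated error, since
`M` is non-expanding, and adds the three-point discrepancy `c·D̄·(t (r (k+1)) - t (r k))`, so the
errors telescope. Two refinements with the same endpoints are therefore within twice that bound of
each other.
-/

/-- Composite of the maps `M` along the increasing enumeration `r` of a subdivision:
`chainAlong M r k = M (r (k-1)) (r k) ∘ ⋯ ∘ M (r 0) (r 1) : X (r 0) → X (r k)`. -/
def chainAlong {X : ℕ → Type*} (M : ∀ i j : ℕ, X i → X j) (r : ℕ → ℕ) :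
    ∀ k : ℕ, X (r 0) → X (r k)
  | 0 => id
  | (k + 1) => M (r k) (r (k + 1)) ∘ chainAlong M r k

section ChainAlong

variable {X : ℕ → Type*} [∀ i, MetricSpace (X i)] {M : ∀ i j : ℕ, X i → X j} {t : ℕ → ℝ}
  {c Dbar : ℝ} {b : ∀ i, X i}

theorem dist_chainAlong_le (hc : 0 ≤ c) (hD : 0 ≤ Dbar) (ht : Monotone t)
    (hlip : ∀ i j : ℕ, i < j → LipschitzWith 1 (M i j))
    (hdisc : ∀ i j k : ℕ, i < j → j < k → ∀ x : X i, dist x (b i) ≤ 1 →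
      dist (M j k (M i j x)) (M i k x) ≤ c * (t k - t j) * Dbar)
    {r : ℕ → ℕ} (hr : StrictMono r) {x : X (r 0)} (hx : dist x (b (r 0)) ≤ 1)
    {n : ℕ} (hn : 1 ≤ n) :
    dist (chainAlong M r n x) (M (r 0) (r n) x) ≤ c * Dbar * (t (r n) - t (r 0)) := by
  induction n, hn using Nat.le_induction with
  | base =>
    have : t (r 0) ≤ t (r 1) := ht (hr zero_lt_one).le
    simp only [chainAlong, Function.comp_apply, id, dist_self]
    exact mul_nonneg (mul_nonneg hc hD) (sub_nonneg.mpr this)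
  | succ n hn ih =>
    have hstep : r n < r (n + 1) := hr n.lt_succ_self
    have hlast : dist (M (r n) (r (n + 1)) (chainAlong M r n x))
        (M (r n) (r (n + 1)) (M (r 0) (r n) x)) ≤ dist (chainAlong M r n x) (M (r 0) (r n) x) := by
      simpa using (hlip _ _ hstep).dist_le_mul (chainAlong M r n x) (M (r 0) (r n) x)
    calc dist (chainAlong M r (n + 1) x) (M (r 0) (r (n + 1)) x)
        ≤ dist (M (r n) (r (n + 1)) (chainAlong M r n x)) (M (r n) (r (n + 1)) (M (r 0) (r n) x))
          + dist (M (r n) (r (n + 1)) (M (r 0) (r n) x)) (M (r 0) (r (n + 1)) x) :=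
          dist_triangle _ _ _
      _ ≤ c * Dbar * (t (r n) - t (r 0)) + c * (t (r (n + 1)) - t (r n)) * Dbar :=
          add_le_add (hlast.trans ih) (hdisc _ _ _ (hr (by omega)) hstep x hx)
      _ = c * Dbar * (t (r (n + 1)) - t (r 0)) := by ring

theorem dist_cast_chainAlong_le (hc : 0 ≤ c) (hD : 0 ≤ Dbar) (ht : Monotone t)
    (hlip : ∀ i j : ℕ, i < j → LipschitzWith 1 (M i j))
    (hdisc : ∀ i j k : ℕ, i < j → j < k → ∀ x : X i, dist x (b i) ≤ 1 →
      dist (M j k (M i j x)) (M i k x) ≤ c * (t k - t j) * Dbar)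
    {r : ℕ → ℕ} (hr : StrictMono r) {n a e : ℕ} (h0 : r 0 = a) (he : r n = e) (hae : a ≠ e)
    {x : X a} (hx : dist x (b a) ≤ 1) :
    dist (cast (congrArg X he) (chainAlong M r n (cast (congrArg X h0.symm) x))) (M a e x)
      ≤ c * Dbar * (t e - t a) := by
  subst h0 he
  have hn : 1 ≤ n := Nat.one_le_iff_ne_zero.mpr (by rintro rfl; exact hae rfl)
  exact dist_chainAlong_le hc hD ht hlip hdisc hr hx hn

end ChainAlong

theorem stmt18_general {X : ℕ → Type*} [∀ i, MetricSpace (X i)]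
    (M : ∀ i j : ℕ, X i → X j) (t : ℕ → ℝ) (c Dbar : ℝ) (hc : 0 ≤ c) (hD : 0 ≤ Dbar)
    (ht : StrictMono t) (b : ∀ i, X i)
    (hlip : ∀ i j : ℕ, i < j → LipschitzWith 1 (M i j))
    (hdisc : ∀ i j k : ℕ, i < j → j < k → ∀ x : X i, dist x (b i) ≤ 1 →
      dist (M j k (M i j x)) (M i k x) ≤ c * (t k - t j) * Dbar)
    -- the subdivision `S`, given by indices `s 0 < s 1 < ⋯ < s m`
    (s : ℕ → ℕ) (m : ℕ)
    -- two refinements `r₁` (with `n₁` steps) and `r₂` (with `n₂` steps) of `S`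
    (r₁ r₂ : ℕ → ℕ) (n₁ n₂ : ℕ) (hr₁ : StrictMono r₁) (hr₂ : StrictMono r₂)
    (h₁0 : r₁ 0 = s 0) (h₂0 : r₂ 0 = s 0)
    (h₁e : r₁ n₁ = s m) (h₂e : r₂ n₂ = s m) :
    ∀ x : X (s 0), dist x (b (s 0)) ≤ 1 →
      dist (cast (congrArg X h₁e) (chainAlong M r₁ n₁ (cast (congrArg X h₁0.symm) x)))
           (cast (congrArg X h₂e) (chainAlong M r₂ n₂ (cast (congrArg X h₂0.symm) x)))
        ≤ 2 * c * Dbar * (t (s m) - t (s 0)) := by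
  intro x hx
  by_cases hsm : s 0 = s m
  · have hn₁ : n₁ = 0 := hr₁.injective (h₁e.trans (hsm.symm.trans h₁0.symm))
    have hn₂ : n₂ = 0 := hr₂.injective (h₂e.trans (hsm.symm.trans h₂0.symm))
    subst hn₁ hn₂
    simp [chainAlong, hsm]
  · have hclose₁ := dist_cast_chainAlong_le hc hD ht.monotone hlip hdisc hr₁ h₁0 h₁e hsm hx
    have hclose₂ := dist_cast_chainAlong_le hc hD ht.monotone hlip hdisc hr₂ h₂0 h₂e hsm hx
    calc _ ≤ _ + _ := dist_triangle _ (M (s 0) (s m) x) _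
      _ ≤ c * Dbar * (t (s m) - t (s 0)) + c * Dbar * (t (s m) - t (s 0)) :=
          add_le_add hclose₁ (dist_comm (M (s 0) (s m) x) _ ▸ hclose₂)
      _ = 2 * c * Dbar * (t (s m) - t (s 0)) := by ring

/-- given non-expanding maps `M i j` with three-point discrepancy bounded by
`c·(t k - t j)·D̄` on the unit ball, the compositions along two refinements `r₁`, `r₂` of a
subdivision `s 0 < ⋯ < s m` (with common endpoints `s 0` and `s m`) applied to a unit-ball
element differ by at most `2·c·D̄·(t (s m) - t (s 0))`. -/
theorem stmt18 {X : ℕ → Type*} [∀ i, MetricSpace (X i)]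
    (M : ∀ i j : ℕ, X i → X j) (t : ℕ → ℝ) (c Dbar : ℝ) (hc : 0 ≤ c) (hD : 0 ≤ Dbar)
    (ht : StrictMono t) (b : ∀ i, X i)
    (hlip : ∀ i j : ℕ, i < j → LipschitzWith 1 (M i j))
    (hdisc : ∀ i j k : ℕ, i < j → j < k → ∀ x : X i, dist x (b i) ≤ 1 →
      dist (M j k (M i j x)) (M i k x) ≤ c * (t k - t j) * Dbar)
    -- the subdivision `S`, given by indices `s 0 < s 1 < ⋯ < s m`
    (s : ℕ → ℕ) (m : ℕ) (hm : 1 ≤ m) (hs : StrictMono s)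
    -- two refinements `r₁` (with `n₁` steps) and `r₂` (with `n₂` steps) of `S`
    (r₁ r₂ : ℕ → ℕ) (n₁ n₂ : ℕ) (hr₁ : StrictMono r₁) (hr₂ : StrictMono r₂)
    (h₁0 : r₁ 0 = s 0) (h₂0 : r₂ 0 = s 0)
    (h₁e : r₁ n₁ = s m) (h₂e : r₂ n₂ = s m)
    (href₁ : ∀ j ≤ m, ∃ k ≤ n₁, r₁ k = s j)
    (href₂ : ∀ j ≤ m, ∃ k ≤ n₂, r₂ k = s j) :
    ∀ x : X (s 0), dist x (b (s 0)) ≤ 1 →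
      dist (cast (congrArg X h₁e) (chainAlong M r₁ n₁ (cast (congrArg X h₁0.symm) x)))
           (cast (congrArg X h₂e) (chainAlong M r₂ n₂ (cast (congrArg X h₂0.symm) x)))
        ≤ 2 * c * Dbar * (t (s m) - t (s 0)) :=
  stmt18_general M t c Dbar hc hD ht b hlip hdisc s m r₁ r₂ n₁ n₂ hr₁ hr₂ h₁0 h₂0 h₁e h₂e
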